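/- In a run of the improved slice-based complement construction that passes through infinitely many reset slices after entering the decorated phase, every node decorated 0 or * at any decorated slice of the run has only finitely many descendants: all descendants of a 0-node die out before the next reset slice, and all descendants of a *-node die out before the second-next reset slice. -/
import Mathlib


/-- Decorations of slice nodes. -/
inductive Dec | zero | star | one
deriving DecidableEq

/-- A decorated slice: a sequence of sets of states with decorations. -/
abbrev DSlice (Q : Type*) := List (Set Q × Dec)

/-- Two adjacent decorations are mergible iff equal and in `{0, *}`. -/
def mergibleB (d e : Dec) : Bool :=
  decide (d = e) && (decide (d = Dec.zero) || decide (d = Dec.star))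

/-- `merge`: recursively merge all adjacent mergible nodes. -/
def dmerge {Q : Type*} : DSlice Q → DSlice Q
  | [] => []
  | [x] => [x]
  | x :: y :: rest =>
    if mergibleB x.2 y.2 then dmerge ((x.1 ∪ y.1, x.2) :: rest)
    else x :: dmerge (y :: rest)
termination_by s => s.length

/-- Merge as many as possible but at most `j` merging operations at the front
(so at most `j + 1` consecutive nodes get merged into one). -/
def mergeFront {Q : Type*} : ℕ → DSlice Q → DSlice Q
  | 0, s => s
  | _ + 1, [] => []
  | _ + 1, [x] => [x]
  | j + 1, x :: y :: rest =>
    if mergibleB x.2 y.2 then mergeFront j ((x.1 ∪ y.1, x.2) :: rest) else x :: y :: rest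

/-- The positions of the mergible pairs of adjacent nodes, left to right. -/
def mergiblePos {Q : Type*} (s : DSlice Q) : List ℕ :=
  (List.range s.length).filter fun k =>
    match s[k]?, s[k + 1]? with
    | some x, some y => mergibleB x.2 y.2
    | _, _ => false

/-- `merge_{i,j}`: merge as many as possible and at most `j` consecutive
mergible nodes, starting from the `i`-th (1-indexed) mergible pair. -/
def mergeIJ {Q : Type*} (i j : ℕ) (s : DSlice Q) : DSlice Q :=
  match (mergiblePos s)[i - 1]? with
  | none => s
  | some k => s.take k ++ mergeFront (j - 1) (s.drop k)

/-- A (decorated) slice is a reset slice iff no node is decorated `0`. -/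
def isResetB {Q : Type*} (s : DSlice Q) : Bool := s.all fun x => !(decide (x.2 = Dec.zero))

/-- A slice is doomed iff no node is decorated `1`. -/
def Doomed {Q : Type*} (s : DSlice Q) : Prop := ∀ x ∈ s, x.2 ≠ Dec.one

/-- Decorations of the (left, right) children of a `d`-decorated node,
depending on whether the current slice is a reset slice. -/
def decPair (reset : Bool) (d : Dec) : Dec × Dec :=
  if reset then
    match d with
    | Dec.one => (Dec.zero, Dec.one)
    | _ => (Dec.zero, Dec.zero)
  else
    match d with
    | Dec.one => (Dec.star, Dec.one)
    | d => (d, d)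

/-- One step of decorated-slice evolution, before deletion of empty nodes. -/
def ddAux {A Q : Type*} (δ : Q → A → Set Q) (F : Set Q) (a : A) (reset : Bool) :
    DSlice Q → Set Q → DSlice Q
  | [], _ => []
  | (Qi, d) :: rest, seen =>
    ((((⋃ q ∈ Qi, δ q a) ∩ F) \ seen), (decPair reset d).1) ::
    ((((⋃ q ∈ Qi, δ q a) \ F) \ seen), (decPair reset d).2) ::
      ddAux δ F a reset rest
        (seen ∪ ((((⋃ q ∈ Qi, δ q a) ∩ F) \ seen)) ∪ (((⋃ q ∈ Qi, δ q a) \ F) \ seen))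

/-- The deterministic decorated-successor function `δ_d'` of the improved
slice-based construction: split nodes, decorate children, delete empty nodes. -/
noncomputable def ddSucc {A Q : Type*} (δ : Q → A → Set Q) (F : Set Q)
    (s : DSlice Q) (a : A) : DSlice Q :=
  (ddAux δ F a (isResetB s) s ∅).filter fun x => @decide x.1.Nonempty (Classical.propDecidable _)

/-- Like `ddAux`, but recording for each node its (left child, right child). -/
def ddTriples {A Q : Type*} (δ : Q → A → Set Q) (F : Set Q) (a : A) (reset : Bool) :
    DSlice Q → Set Q → List ((Set Q × Dec) × (Set Q × Dec) × (Set Q × Dec))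
  | [], _ => []
  | (Qi, d) :: rest, seen =>
    ((Qi, d),
     ((((⋃ q ∈ Qi, δ q a) ∩ F) \ seen), (decPair reset d).1),
     ((((⋃ q ∈ Qi, δ q a) \ F) \ seen), (decPair reset d).2)) ::
      ddTriples δ F a reset rest
        (seen ∪ ((((⋃ q ∈ Qi, δ q a) ∩ F) \ seen)) ∪ (((⋃ q ∈ Qi, δ q a) \ F) \ seen))

/-- `y` is a (nonempty) child of the node `x` of the decorated slice `s` on `a`. -/
def IsChildD {A Q : Type*} (δ : Q → A → Set Q) (F : Set Q) (s : DSlice Q) (a : A)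
    (x y : Set Q × Dec) : Prop :=
  ∃ tr ∈ ddTriples δ F a (isResetB s) s ∅, tr.1 = x ∧ y.1.Nonempty ∧
    (tr.2.1 = y ∨ tr.2.2 = y)

/-- `DescFrom δ F w t n x m y`: the node `y` of the slice `t m` is a descendant
of the node `x` of the slice `t n` in the slice sequence `t`. -/
inductive DescFrom {A Q : Type*} (δ : Q → A → Set Q) (F : Set Q) (w : ℕ → A)
    (t : ℕ → DSlice Q) (n : ℕ) (x : Set Q × Dec) : ℕ → (Set Q × Dec) → Prop
  | refl : DescFrom δ F w t n x n x
  | step {m : ℕ} {y z : Set Q × Dec} :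
      DescFrom δ F w t n x m y → IsChildD δ F (t m) (w m) y z →
      DescFrom δ F w t n x (m + 1) z

lemma ddTriples_spec {A Q : Type*} (δ : Q → A → Set Q) (F : Set Q) (a : A) (reset : Bool) :
    ∀ (s : DSlice Q) (seen : Set Q) tr, tr ∈ ddTriples δ F a reset s seen →
      tr.1 ∈ s ∧ tr.2.1.2 = (decPair reset tr.1.2).1 ∧ tr.2.2.2 = (decPair reset tr.1.2).2 := by
  intro s
  induction s with
  | nil => intro seen tr h; simp [ddTriples] at h
  | cons p rest ih =>
    intro seen tr h
    obtain ⟨Qi, d⟩ := p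
    rw [ddTriples] at h
    rcases List.mem_cons.mp h with h | h
    · subst h; simp
    · obtain ⟨h1, h2, h3⟩ := ih _ _ h
      exact ⟨List.mem_cons_of_mem _ h1, h2, h3⟩

lemma child_spec {A Q : Type*} {δ : Q → A → Set Q} {F : Set Q} {s : DSlice Q} {a : A}
    {x y : Set Q × Dec} (h : IsChildD δ F s a x y) :
    x ∈ s ∧ (y.2 = (decPair (isResetB s) x.2).1 ∨ y.2 = (decPair (isResetB s) x.2).2) := by
  obtain ⟨tr, htr, h1, _, h2⟩ := h
  obtain ⟨hm, hd1, hd2⟩ := ddTriples_spec δ F a (isResetB s) s ∅ tr htr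
  subst h1
  rcases h2 with h | h
  · exact ⟨hm, Or.inl (h ▸ hd1)⟩
  · exact ⟨hm, Or.inr (h ▸ hd2)⟩

lemma decPair_zero (b : Bool) : decPair b Dec.zero = (Dec.zero, Dec.zero) := by
  cases b <;> rfl

lemma desc_zero {A Q : Type*} {δ : Q → A → Set Q} {F : Set Q} {w : ℕ → A}
    {t : ℕ → DSlice Q} {n : ℕ} {x : Set Q × Dec} {m : ℕ} {y : Set Q × Dec}
    (hx : x.2 = Dec.zero) (h : DescFrom δ F w t n x m y) : y.2 = Dec.zero := by
  induction h with
  | refl => exact hx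
  | step h hc ih =>
    obtain ⟨_, hd⟩ := child_spec hc
    rw [ih, decPair_zero] at hd
    rcases hd with hd | hd <;> exact hd

lemma desc_star_or {A Q : Type*} {δ : Q → A → Set Q} {F : Set Q} {w : ℕ → A}
    {t : ℕ → DSlice Q} {n : ℕ} {x : Set Q × Dec} {m : ℕ} {y : Set Q × Dec}
    (hx : x.2 = Dec.star) (h : DescFrom δ F w t n x m y) :
    y.2 = Dec.star ∨ y.2 = Dec.zero := by
  induction h with
  | refl => exact Or.inl hx
  | @step m' y' z h hc ih =>
    obtain ⟨_, hd⟩ := child_spec hc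
    rcases ih with h1 | h1 <;> rw [h1] at hd
    · cases hb : isResetB (t m') <;> rw [hb] at hd <;>
        rcases hd with hd | hd <;> simp [decPair] at hd <;> simp [hd]
    · rw [decPair_zero] at hd; rcases hd with hd | hd <;> exact Or.inr hd

lemma desc_star_reset {A Q : Type*} {δ : Q → A → Set Q} {F : Set Q} {w : ℕ → A}
    {t : ℕ → DSlice Q} {n : ℕ} {x : Set Q × Dec} {m : ℕ} {y : Set Q × Dec}
    (hx : x.2 = Dec.star) (h : DescFrom δ F w t n x m y) :
    ∀ r, n ≤ r → r < m → isResetB (t r) = true → y.2 = Dec.zero := by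
  induction h with
  | refl => intro r h1 h2; omega
  | @step m' y' z h hc ih =>
    intro r h1 h2 hres
    obtain ⟨_, hd⟩ := child_spec hc
    rcases Nat.lt_succ_iff_lt_or_eq.mp h2 with h2 | h2
    · rw [ih r h1 h2 hres, decPair_zero] at hd
      rcases hd with hd | hd <;> exact hd
    · subst h2
      rw [hres] at hd
      rcases desc_star_or hx h with h1 | h1 <;> rw [h1] at hd <;>
        rcases hd with hd | hd <;> simpa [decPair] using hd

lemma desc_mid {A Q : Type*} {δ : Q → A → Set Q} {F : Set Q} {w : ℕ → A}
    {t : ℕ → DSlice Q} {n : ℕ} {x : Set Q × Dec} {m : ℕ} {y : Set Q × Dec}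
    (h : DescFrom δ F w t n x m y) :
    ∀ r, n ≤ r → r < m → ∃ z, z ∈ t r ∧ DescFrom δ F w t n x r z := by
  induction h with
  | refl => intro r h1 h2; omega
  | @step m' y' z h hc ih =>
    intro r h1 h2
    rcases Nat.lt_succ_iff_lt_or_eq.mp h2 with h2 | h2
    · exact ih r h1 h2
    · subst h2; exact ⟨y', (child_spec hc).1, h⟩

lemma reset_no_zero {Q : Type*} {s : DSlice Q} (hres : isResetB s = true)
    {y : Set Q × Dec} (hy : y ∈ s) : y.2 ≠ Dec.zero := by
  obtain ⟨a, b⟩ := y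
  simp [isResetB, List.all_eq_true] at hres
  exact hres a b hy

/-- In a decorated-phase run with infinitely many reset slices, every node
decorated `0` or `*` has only finitely many descendants: the descendants of a
`0`-node die out before (hence are absent from) any later reset slice, and the
descendants of a `*`-node die out before the second-next reset slice. -/
theorem stmt16 {A Q : Type*} (δ : Q → A → Set Q) (F : Set Q) (w : ℕ → A)
    (t : ℕ → DSlice Q) (hrun : ∀ n, t (n + 1) = ddSucc δ F (t n) (w n))
    (hreset : ∀ N, ∃ r ≥ N, isResetB (t r) = true)
    (n : ℕ) (x : Set Q × Dec) (hx : x ∈ t n) :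
    ((x.2 = Dec.zero → ∀ r m : ℕ, n < r → r ≤ m → isResetB (t r) = true →
        ∀ y ∈ t m, ¬ DescFrom δ F w t n x m y) ∧
     (x.2 = Dec.star → ∀ r₁ r₂ m : ℕ, n < r₁ → r₁ < r₂ → r₂ ≤ m →
        isResetB (t r₁) = true → isResetB (t r₂) = true →
        ∀ y ∈ t m, ¬ DescFrom δ F w t n x m y) ∧
     ((x.2 = Dec.zero ∨ x.2 = Dec.star) →
        ∃ N : ℕ, ∀ m ≥ N, ∀ y ∈ t m, ¬ DescFrom δ F w t n x m y)) := by
  have hzero : x.2 = Dec.zero → ∀ r m : ℕ, n < r → r ≤ m → isResetB (t r) = true →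
      ∀ y ∈ t m, ¬ DescFrom δ F w t n x m y := by
    intro hx r m hnr hrm hres y hy hd
    rcases eq_or_lt_of_le hrm with h | h
    · subst h; exact reset_no_zero hres hy (desc_zero hx hd)
    · obtain ⟨z, hz, hzd⟩ := desc_mid hd r (le_of_lt hnr) h
      exact reset_no_zero hres hz (desc_zero hx hzd)
  have hstar : x.2 = Dec.star → ∀ r₁ r₂ m : ℕ, n < r₁ → r₁ < r₂ → r₂ ≤ m →
      isResetB (t r₁) = true → isResetB (t r₂) = true →
      ∀ y ∈ t m, ¬ DescFrom δ F w t n x m y := by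
    intro hx r₁ r₂ m h1 h2 h3 hres1 hres2 y hy hd
    rcases eq_or_lt_of_le h3 with h | h
    · subst h
      exact reset_no_zero hres2 hy (desc_star_reset hx hd r₁ (le_of_lt h1) h2 hres1)
    · obtain ⟨z, hz, hzd⟩ := desc_mid hd r₂ (by omega) h
      exact reset_no_zero hres2 hz (desc_star_reset hx hzd r₁ (le_of_lt h1) h2 hres1)
  refine ⟨hzero, hstar, ?_⟩
  rintro (hx | hx)
  · obtain ⟨r, hr, hres⟩ := hreset (n + 1)
    exact ⟨r, fun m hm y hy hd => hzero hx r m (by omega) hm hres y hy hd⟩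
  · obtain ⟨r₁, hr1, hres1⟩ := hreset (n + 1)
    obtain ⟨r₂, hr2, hres2⟩ := hreset (r₁ + 1)
    exact ⟨r₂, fun m hm y hy hd =>
      hstar hx r₁ r₂ m (by omega) (by omega) hm hres1 hres2 y hy hd⟩
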